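/- arXiv:0908.2228 — 2 statements merged into one kernel-verified Lean document; each statement's English description precedes it below -/
import Mathlib

section
/- Let (X_n)_{n∈ω} be an increasing sequence of topological groups in which each X_n is a topological subgroup of X_{n+1}, each X_n is a SIN-group, and each X_n carries its two-sided uniformity. Then the topology of the uniform direct limit u-lim X_n coincides with the topology of the group direct limit g-lim X_n: it is the strongest topology on X = ⋃_n X_n that turns X into a topological group and makes all the identity inclusions X_n → X continuous. In particular, the identity map u-lim X_n → g-lim X_n is a homeomorphism. -/
/-!
Call `(Vₖ)` admissible if each `Vₖ` is an open symmetric neighbourhood of `1` in `Xₖ` invariant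
under conjugation by `Xₖ`, and put `∏ V = ⋃ₙ V₀ V₁ ⋯ Vₙ`. Since each factor is invariant under
conjugation by the product of the earlier ones, these sets satisfy the axioms of a neighbourhood
base at `1` of a group topology: `(∏ V)⁻¹ ⊆ ∏ V`, `∏ W · ∏ W ⊆ ∏ V` when `Wₖ Wₖ ⊆ Vₖ` (such `W`
exist by the SIN property), and conjugation by `x ∈ Xₘ` maps the product of `Vₖ₊ₘ ∩ Xₖ` into `∏ V`.
All inclusions `Xₙ → X` are continuous for the resulting group topology `τ`.

Any group topology with continuous inclusions is coarser than the u-lim topology, because its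
right uniformity makes the inclusions uniformly continuous for the two-sided uniformities; in
particular u-lim is finer than `τ`. Conversely, let a uniformity make the inclusions uniformly
continuous, and fix an entourage `E` and `x ∈ Xₘ`. Choose entourages `E₀ = E` and
`Eₖ₊₁ ∘ Eₖ₊₁ ⊆ Eₖ`, and admissible `Vₖ` with `(a, a v) ∈ Eₖ₊₁` whenever `a ∈ X_{max k m}` and
`v ∈ Vₖ`. Telescoping along `x, x v₀, x v₀ v₁, …` puts `x ∏ V` into the `E`-ball of `x`, so `τ`
is finer than u-lim.
-/

open Set Filter Topology Pointwise

universe u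

/-- The uniform direct limit uniformity of an increasing sequence of uniform subspaces of `G`:
the strongest (finest) uniformity on `G` making all inclusions uniformly continuous. -/
noncomputable def uDirLim {G : Type u} (S : ℕ → Set G)
    (u : (n : ℕ) → UniformSpace (S n)) : UniformSpace G :=
  sInf {u' : UniformSpace G |
    ∀ n, @UniformContinuous _ _ (u n) u' (Subtype.val : S n → G)}

open scoped SetRel Uniformity

def IsSIN (H : Type*) [Group H] [TopologicalSpace H] : Prop :=
  ∀ W ∈ 𝓝 (1 : H), ∃ U : Set H, U ⊆ W ∧ IsOpen U ∧ (1 : H) ∈ U ∧ U⁻¹ = U ∧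
    ∀ g : H, (fun x => g * x * g⁻¹) '' U = U

def IsTwoSidedUniformity (H : Type*) [Group H] [TopologicalSpace H] (uH : UniformSpace H) :
    Prop :=
  (@uniformity H uH).HasBasis (fun U : Set H => IsOpen U ∧ (1 : H) ∈ U ∧ U⁻¹ = U)
    (fun U => {p : H × H | p.2⁻¹ * p.1 ∈ U ∧ p.1 * p.2⁻¹ ∈ U})

theorem exists_isOpen_inv_eq_subset {H : Type*} [Group H] [TopologicalSpace H]
    [IsTopologicalGroup H] {V : Set H} (hV : V ∈ 𝓝 (1 : H)) :
    ∃ U : Set H, IsOpen U ∧ (1 : H) ∈ U ∧ U⁻¹ = U ∧ U ⊆ V := by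
  have h1 : (1 : H) ∈ interior V := mem_interior_iff_mem_nhds.2 hV
  refine ⟨interior V ∩ (interior V)⁻¹, isOpen_interior.inter isOpen_interior.inv,
    ⟨h1, by simpa using h1⟩, by rw [Set.inter_inv, inv_inv, Set.inter_comm],
    Set.inter_subset_left.trans interior_subset⟩

theorem MonoidHom.uniformContinuous_rightUniformSpace {H K : Type*} [Group H]
    [TopologicalSpace H] [IsTopologicalGroup H] [Group K] [TopologicalSpace K]
    [IsTopologicalGroup K] {uH : UniformSpace H}
    (hbasis : IsTwoSidedUniformity H uH)
    (f : H →* K) (hf : Continuous f) :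
    @UniformContinuous H K uH (IsTopologicalGroup.rightUniformSpace K) f := by
  let := IsTopologicalGroup.rightUniformSpace K
  rw [UniformContinuous, uniformity_eq_comap_nhds_one' K, tendsto_comap_iff,
    hbasis.tendsto_left_iff]
  intro V hV
  obtain ⟨U, hUo, hU1, hUinv, hUV⟩ :=
    exists_isOpen_inv_eq_subset (hf.continuousAt.preimage_mem_nhds (by rwa [map_one]))
  refine ⟨U, ⟨hUo, hU1, hUinv⟩, fun p hp => ?_⟩
  have : (p.1 * p.2⁻¹)⁻¹ ∈ U := hUinv ▸ Set.inv_mem_inv.2 hp.2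
  simpa using hUV this

theorem exists_seq_comp_subset {α : Type*} [UniformSpace α] {E : SetRel α α} (hE : E ∈ 𝓤 α) :
    ∃ V : ℕ → SetRel α α, V 0 = E ∧ (∀ k, V k ∈ 𝓤 α) ∧ ∀ k, V (k + 1) ○ V (k + 1) ⊆ V k := by
  choose! f hf hff using fun A (hA : A ∈ 𝓤 α) => comp_mem_uniformity_sets hA
  have hmem : ∀ k, f^[k] E ∈ 𝓤 α := by
    intro k
    induction k with
    | zero => exact hE
    | succ k ih => rw [Function.iterate_succ_apply']; exact hf _ ih
  exact ⟨fun k => f^[k] E, rfl, hmem, fun k => by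
    simpa only [Function.iterate_succ_apply'] using hff _ (hmem k)⟩

theorem continuous_subtype_val_uDirLim {G : Type*} (S : ℕ → Set G)
    (u : (n : ℕ) → UniformSpace (S n)) (n : ℕ) :
    @Continuous _ _ (u n).toTopologicalSpace (uDirLim S u).toTopologicalSpace
      (Subtype.val : S n → G) :=
  @UniformContinuous.continuous _ _ (u n) (uDirLim S u) _
    (uniformContinuous_sInf_rng.2 fun _ hu' => hu' n)

theorem uDirLim_toTopologicalSpace_le {G : Type*} [Group G] {S : ℕ → Subgroup G}
    {t : (n : ℕ) → TopologicalSpace (S n)} (htg : ∀ n, @IsTopologicalGroup (S n) (t n) _)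
    {u : (n : ℕ) → UniformSpace (S n)}
    (hbasis : ∀ n, @IsTwoSidedUniformity (S n) _ (t n) (u n))
    {t' : TopologicalSpace G} (ht' : @IsTopologicalGroup G t' _)
    (hcont : ∀ n, @Continuous _ _ (t n) t' ((↑) : S n → G)) :
    (uDirLim (fun n => (S n : Set G)) u).toTopologicalSpace ≤ t' :=
  UniformSpace.toTopologicalSpace_mono (u₂ := @IsTopologicalGroup.rightUniformSpace G _ t' ht') <|
    sInf_le fun n => @MonoidHom.uniformContinuous_rightUniformSpace _ _ _ (t n) (htg n) _ t' ht'
      (u n) (hbasis n) (S n).subtype (hcont n)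

namespace SINDirectLimit

variable {G : Type*} [Group G]

structure IsSymmConjInvariant (H : Subgroup G) (V : Set G) : Prop where
  subset : V ⊆ H
  one_mem : (1 : G) ∈ V
  inv_mem : ∀ v ∈ V, v⁻¹ ∈ V
  conj_mem : ∀ g ∈ H, ∀ v ∈ V, g * v * g⁻¹ ∈ V

def partialProd (φ : ℕ → Set G) : ℕ → Set G
  | 0 => 1
  | n + 1 => partialProd φ n * φ n

def seqProd (φ : ℕ → Set G) : Set G := ⋃ n, partialProd φ n

section Products

variable {S : ℕ → Subgroup G} {φ ψ : ℕ → Set G}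

theorem one_mem_partialProd (hφ : ∀ k, (1 : G) ∈ φ k) : ∀ n, (1 : G) ∈ partialProd φ n
  | 0 => Set.one_mem_one
  | n + 1 => by simpa [partialProd] using Set.mul_mem_mul (one_mem_partialProd hφ n) (hφ n)

theorem partialProd_mono_right (hφ : ∀ k, (1 : G) ∈ φ k) : Monotone (partialProd φ) :=
  monotone_nat_of_le_succ fun n p hp => by
    simpa [partialProd] using Set.mul_mem_mul hp (hφ n)

theorem partialProd_mono_left (h : ∀ k, ψ k ⊆ φ k) : ∀ n, partialProd ψ n ⊆ partialProd φ n
  | 0 => subset_rfl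
  | n + 1 => Set.mul_subset_mul (partialProd_mono_left h n) (h n)

theorem partialProd_subset (mono : Monotone S) (hφ : ∀ k, φ k ⊆ S k) :
    ∀ n, partialProd φ n ⊆ S n
  | 0 => by simp [partialProd]
  | n + 1 => by
      rintro _ ⟨p, hp, v, hv, rfl⟩
      exact mul_mem (mono n.le_succ (partialProd_subset mono hφ n hp)) (mono n.le_succ (hφ n hv))

theorem subset_seqProd (hφ : ∀ k, (1 : G) ∈ φ k) (n : ℕ) : φ n ⊆ seqProd φ :=
  fun v hv => Set.mem_iUnion.2
    ⟨n + 1, by simpa [partialProd] using Set.mul_mem_mul (one_mem_partialProd hφ n) hv⟩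

theorem one_mem_seqProd : (1 : G) ∈ seqProd φ :=
  Set.mem_iUnion.2 ⟨0, Set.one_mem_one⟩

theorem seqProd_mono (h : ∀ k, ψ k ⊆ φ k) : seqProd ψ ⊆ seqProd φ :=
  Set.iUnion_mono fun n => partialProd_mono_left h n

theorem inv_mem_partialProd (mono : Monotone S) (hφ : ∀ k, IsSymmConjInvariant (S k) (φ k)) :
    ∀ n, ∀ p ∈ partialProd φ n, p⁻¹ ∈ partialProd φ n
  | 0 => by simp [partialProd]
  | n + 1 => by
      rintro _ ⟨p, hp, v, hv, rfl⟩
      have hpS : p ∈ S n := partialProd_subset mono (fun k => (hφ k).subset) n hp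
      -- `(p v)⁻¹ = p⁻¹ (p v⁻¹ p⁻¹)`
      refine ⟨p⁻¹, inv_mem_partialProd mono hφ n p hp, p * v⁻¹ * p⁻¹,
        (hφ n).conj_mem p hpS _ ((hφ n).inv_mem v hv), by group⟩

theorem inv_mem_seqProd (mono : Monotone S) (hφ : ∀ k, IsSymmConjInvariant (S k) (φ k))
    {p : G} (hp : p ∈ seqProd φ) : p⁻¹ ∈ seqProd φ := by
  obtain ⟨n, hn⟩ := Set.mem_iUnion.1 hp
  exact Set.mem_iUnion.2 ⟨n, inv_mem_partialProd mono hφ n p hn⟩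

theorem partialProd_mul_subset (mono : Monotone S) (hψ : ∀ k, IsSymmConjInvariant (S k) (ψ k))
    (hψφ : ∀ k, ψ k * ψ k ⊆ φ k) : ∀ n, partialProd ψ n * partialProd ψ n ⊆ partialProd φ n
  | 0 => by simp [partialProd]
  | n + 1 => by
      rintro _ ⟨_, ⟨p, hp, v, hv, rfl⟩, _, ⟨q, hq, w, hw, rfl⟩, rfl⟩
      have hqS : q ∈ S n := partialProd_subset mono (fun k => (hψ k).subset) n hq
      -- `p v q w = p q (q⁻¹ v q) w`
      have hv' : q⁻¹ * v * q⁻¹⁻¹ ∈ ψ n := (hψ n).conj_mem q⁻¹ (inv_mem hqS) v hv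
      refine ⟨p * q, partialProd_mul_subset mono hψ hψφ n (Set.mul_mem_mul hp hq),
        q⁻¹ * v * q⁻¹⁻¹ * w, hψφ n (Set.mul_mem_mul hv' hw), by group⟩

theorem seqProd_mul_subset (mono : Monotone S) (hψ : ∀ k, IsSymmConjInvariant (S k) (ψ k))
    (hψφ : ∀ k, ψ k * ψ k ⊆ φ k) : seqProd ψ * seqProd ψ ⊆ seqProd φ := by
  rintro _ ⟨p, hp, q, hq, rfl⟩
  obtain ⟨i, hi⟩ := Set.mem_iUnion.1 hp
  obtain ⟨j, hj⟩ := Set.mem_iUnion.1 hq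
  have hone : ∀ k, (1 : G) ∈ ψ k := fun k => (hψ k).one_mem
  exact Set.mem_iUnion.2 ⟨max i j, partialProd_mul_subset mono hψ hψφ _ (Set.mul_mem_mul
    (partialProd_mono_right hone (le_max_left i j) hi)
    (partialProd_mono_right hone (le_max_right i j) hj))⟩

theorem conj_mem_partialProd (mono : Monotone S) (hφ : ∀ k, IsSymmConjInvariant (S k) (φ k))
    {m : ℕ} {g : G} (hg : g ∈ S m) (hψ : ∀ k, ψ k ⊆ φ (k + m)) :
    ∀ n, ∀ z ∈ partialProd ψ n, g * z * g⁻¹ ∈ partialProd φ (n + m)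
  | 0 => by
      simpa [partialProd] using one_mem_partialProd (fun k => (hφ k).one_mem) m
  | n + 1 => by
      rintro _ ⟨p, hp, v, hv, rfl⟩
      rw [Nat.add_right_comm]
      exact ⟨g * p * g⁻¹, conj_mem_partialProd mono hφ hg hψ n p hp, g * v * g⁻¹,
        (hφ (n + m)).conj_mem g (mono (by omega) hg) v (hψ n hv), by group⟩

theorem conj_mem_seqProd (mono : Monotone S) (hφ : ∀ k, IsSymmConjInvariant (S k) (φ k))
    {m : ℕ} {g : G} (hg : g ∈ S m) (hψ : ∀ k, ψ k ⊆ φ (k + m)) {z : G} (hz : z ∈ seqProd ψ) :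
    g * z * g⁻¹ ∈ seqProd φ := by
  obtain ⟨n, hn⟩ := Set.mem_iUnion.1 hz
  exact Set.mem_iUnion.2 ⟨n + m, conj_mem_partialProd mono hφ hg hψ n z hn⟩

theorem mk_one_mem_of_mem_seqProd {R : ℕ → SetRel G G} (hrefl : ∀ k a, (a, a) ∈ R k)
    (hcomp : ∀ k, R (k + 1) ○ R (k + 1) ⊆ R k)
    (hstep : ∀ k, ∀ q ∈ partialProd φ k, ∀ v ∈ φ k, (q, q * v) ∈ R (k + 1))
    {p : G} (hp : p ∈ seqProd φ) : ((1 : G), p) ∈ R 0 := by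
  obtain ⟨n, hn⟩ := Set.mem_iUnion.1 hp
  suffices ∀ n, ∀ q ∈ partialProd φ n, ∀ z, (q, z) ∈ R n → ((1 : G), z) ∈ R 0 from
    this n p hn p (hrefl n p)
  intro n
  induction n with
  | zero => rintro _ rfl z hz; exact hz
  | succ n ih =>
      rintro _ ⟨q, hq, v, hv, rfl⟩ z hz
      exact ih q hq z (hcomp n ⟨q * v, hstep n q hq v hv, hz⟩)

end Products

structure IsAdmissible (S : ℕ → Subgroup G) (t : (n : ℕ) → TopologicalSpace (S n)) (n : ℕ)
    (V : Set G) : Prop extends IsSymmConjInvariant (S n) V where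
  isOpen : IsOpen[t n] ((↑) ⁻¹' V : Set (S n))

section Admissible

variable {S : ℕ → Subgroup G} {t : (n : ℕ) → TopologicalSpace (S n)} {n : ℕ} {V V' : Set G}

theorem IsAdmissible.inter (h : IsAdmissible S t n V) (h' : IsAdmissible S t n V') :
    IsAdmissible S t n (V ∩ V') where
  subset := Set.inter_subset_left.trans h.subset
  one_mem := ⟨h.one_mem, h'.one_mem⟩
  inv_mem v hv := ⟨h.inv_mem v hv.1, h'.inv_mem v hv.2⟩
  conj_mem g hg v hv := ⟨h.conj_mem g hg v hv.1, h'.conj_mem g hg v hv.2⟩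
  isOpen := @IsOpen.inter _ (t n) _ _ h.isOpen h'.isOpen

theorem isAdmissible_subgroup : IsAdmissible S t n (S n) where
  subset := subset_rfl
  one_mem := one_mem _
  inv_mem _ hv := inv_mem hv
  conj_mem _ hg _ hv := mul_mem (mul_mem hg hv) (inv_mem hg)
  isOpen := by
    rw [Subtype.coe_preimage_self]
    exact @isOpen_univ _ (t n)

theorem isOpen_preimage_val_of_le (mono : Monotone S)
    (hcompat_t : ∀ n, t n =
      TopologicalSpace.induced (⇑(Subgroup.inclusion (mono (Nat.le_succ n)))) (t (n + 1)))
    {k N : ℕ} (hkN : k ≤ N) {A : Set G} (hA : IsOpen[t N] ((↑) ⁻¹' A : Set (S N))) :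
    IsOpen[t k] ((↑) ⁻¹' A : Set (S k)) := by
  induction N, hkN using Nat.le_induction with
  | base => exact hA
  | succ N _ ih =>
      apply ih
      rw [hcompat_t N]
      exact ⟨_, hA, rfl⟩

theorem IsAdmissible.restrict (mono : Monotone S)
    (hcompat_t : ∀ n, t n =
      TopologicalSpace.induced (⇑(Subgroup.inclusion (mono (Nat.le_succ n)))) (t (n + 1)))
    {k N : ℕ} (hkN : k ≤ N) {T : Set G} (hT : IsAdmissible S t N T) :
    IsAdmissible S t k (T ∩ S k) where
  subset := Set.inter_subset_right
  one_mem := ⟨hT.one_mem, one_mem _⟩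
  inv_mem v hv := ⟨hT.inv_mem v hv.1, inv_mem hv.2⟩
  conj_mem g hg v hv := ⟨hT.conj_mem g (mono hkN hg) v hv.1, mul_mem (mul_mem hg hv.2) (inv_mem hg)⟩
  isOpen := by
    have : ((↑) ⁻¹' (T ∩ S k) : Set (S k)) = (↑) ⁻¹' T := by ext x; simp
    rw [this]
    exact isOpen_preimage_val_of_le mono hcompat_t hkN hT.isOpen

theorem exists_isAdmissible_preimage_subset (hSIN : @IsSIN (S n) _ (t n)) {W : Set (S n)}
    (hW : W ∈ @nhds _ (t n) 1) : ∃ V, IsAdmissible S t n V ∧ (↑) ⁻¹' V ⊆ W := by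
  obtain ⟨U, hUW, hUo, hU1, hUinv, hUconj⟩ := hSIN W hW
  refine ⟨(↑) '' U, ⟨⟨?_, ⟨1, hU1, rfl⟩, ?_, ?_⟩, ?_⟩, ?_⟩
  · rintro _ ⟨a, -, rfl⟩
    exact a.2
  · rintro _ ⟨a, ha, rfl⟩
    exact ⟨a⁻¹, hUinv ▸ Set.inv_mem_inv.2 ha, rfl⟩
  · rintro g hg _ ⟨a, ha, rfl⟩
    exact ⟨⟨g, hg⟩ * a * ⟨g, hg⟩⁻¹, hUconj ⟨g, hg⟩ ▸ Set.mem_image_of_mem _ ha, rfl⟩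
  · rwa [Set.preimage_image_eq _ Subtype.val_injective]
  · rwa [Set.preimage_image_eq _ Subtype.val_injective]

theorem exists_isAdmissible_mul_subset (htg : @IsTopologicalGroup (S n) (t n) _)
    (hSIN : @IsSIN (S n) _ (t n)) (hV : IsAdmissible S t n V) :
    ∃ V', IsAdmissible S t n V' ∧ V' * V' ⊆ V := by
  let := t n
  obtain ⟨W, hW, hWV⟩ := exists_nhds_one_split (hV.isOpen.mem_nhds hV.one_mem)
  obtain ⟨V', hV', hV'W⟩ := exists_isAdmissible_preimage_subset hSIN hW
  refine ⟨V', hV', ?_⟩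
  rintro _ ⟨a, ha, b, hb, rfl⟩
  exact hWV ⟨a, hV'.subset ha⟩ (hV'W ha) ⟨b, hV'.subset hb⟩ (hV'W hb)

end Admissible

section Comparison

variable {S : ℕ → Subgroup G} {t : (n : ℕ) → TopologicalSpace (S n)}
  {u : (n : ℕ) → UniformSpace (S n)}

theorem exists_isAdmissible_of_mem_uniformity {N : ℕ} (hSIN : @IsSIN (S N) _ (t N))
    (hbasis : @IsTwoSidedUniformity (S N) _ (t N) (u N))
    {u' : UniformSpace G} (hu' : @UniformContinuous _ _ (u N) u' ((↑) : S N → G))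
    {E : SetRel G G} (hE : E ∈ @uniformity G u') :
    ∃ T, IsAdmissible S t N T ∧ ∀ a ∈ S N, ∀ b ∈ S N, a⁻¹ * b ∈ T → (a, b) ∈ E := by
  obtain ⟨U, ⟨hUo, hU1, -⟩, hUE⟩ := hbasis.mem_iff.1 (hu' hE)
  obtain ⟨T, hT, hTU⟩ :=
    exists_isAdmissible_preimage_subset hSIN (@IsOpen.mem_nhds _ (t N) _ _ hUo hU1)
  refine ⟨T, hT, fun a ha b hb hab => @hUE (⟨a, ha⟩, ⟨b, hb⟩) ⟨hTU ?_, hTU ?_⟩⟩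
  · simpa using hT.inv_mem _ hab
  · simpa [mul_assoc] using hT.conj_mem a ha _ (hT.inv_mem _ hab)

theorem exists_seqProd_subset (mono : Monotone S)
    (hcompat_t : ∀ n, t n =
      TopologicalSpace.induced (⇑(Subgroup.inclusion (mono (Nat.le_succ n)))) (t (n + 1)))
    (hSIN : ∀ n, @IsSIN (S n) _ (t n))
    (hbasis : ∀ n, @IsTwoSidedUniformity (S n) _ (t n) (u n))
    {u' : UniformSpace G} (hu' : ∀ n, @UniformContinuous _ _ (u n) u' ((↑) : S n → G))
    {m : ℕ} {x : G} (hx : x ∈ S m) {E : SetRel G G} (hE : E ∈ @uniformity G u') :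
    ∃ φ : ℕ → Set G, (∀ n, IsAdmissible S t n (φ n)) ∧ ∀ p ∈ seqProd φ, (x, x * p) ∈ E := by
  obtain ⟨V, rfl, hVU, hVcomp⟩ := @exists_seq_comp_subset G u' E hE
  choose T hT hTV using fun k => exists_isAdmissible_of_mem_uniformity (N := max k m)
    (hSIN _) (hbasis _) (hu' _) (hVU (k + 1))
  have hφ : ∀ k, IsAdmissible S t k (T k ∩ S k) :=
    fun k => (hT k).restrict mono hcompat_t (le_max_left k m)
  refine ⟨fun k => T k ∩ S k, hφ, fun p hp => ?_⟩
  have hstep : ∀ k, ∀ q ∈ partialProd (fun k => T k ∩ S k) k, ∀ v ∈ T k ∩ S k,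
      (x * q, x * (q * v)) ∈ V (k + 1) := by
    intro k q hq v hv
    have hxq : x * q ∈ S (max k m) := mul_mem (mono (le_max_right k m) hx)
      (mono (le_max_left k m) (partialProd_subset mono (fun j => (hφ j).subset) k hq))
    exact hTV k _ hxq _ (by simpa [mul_assoc] using mul_mem hxq (mono (le_max_left k m) hv.2))
      (by simpa [mul_assoc] using hv.1)
  simpa using mk_one_mem_of_mem_seqProd (R := fun k => {q | (x * q.1, x * q.2) ∈ V k})
    (fun k a => @refl_mem_uniformity G u' (x * a) _ (hVU k))
    (fun k _ ⟨b, hab, hbc⟩ => hVcomp k ⟨x * b, hab, hbc⟩) hstep hp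

end Comparison

section GroupFilterBasis

variable {S : ℕ → Subgroup G} {t : (n : ℕ) → TopologicalSpace (S n)}
  (mono : Monotone S) (hunion : ∀ x : G, ∃ n, x ∈ S n)
  (htg : ∀ n, @IsTopologicalGroup (S n) (t n) _)
  (hcompat_t : ∀ n, t n =
    TopologicalSpace.induced (⇑(Subgroup.inclusion (mono (Nat.le_succ n)))) (t (n + 1)))
  (hSIN : ∀ n, @IsSIN (S n) _ (t n))

abbrev groupFilterBasis : GroupFilterBasis G where
  sets := {W | ∃ φ : ℕ → Set G, (∀ n, IsAdmissible S t n (φ n)) ∧ seqProd φ = W}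
  nonempty := ⟨_, fun n => S n, fun _ => isAdmissible_subgroup, rfl⟩
  inter_sets := by
    rintro _ _ ⟨φ, hφ, rfl⟩ ⟨ψ, hψ, rfl⟩
    exact ⟨_, ⟨fun n => φ n ∩ ψ n, fun n => (hφ n).inter (hψ n), rfl⟩,
      Set.subset_inter (seqProd_mono fun _ => Set.inter_subset_left)
        (seqProd_mono fun _ => Set.inter_subset_right)⟩
  one' := by
    rintro _ ⟨φ, -, rfl⟩
    exact one_mem_seqProd
  mul' := by
    rintro _ ⟨φ, hφ, rfl⟩
    choose ψ hψ hψφ using fun n => exists_isAdmissible_mul_subset (htg n) (hSIN n) (hφ n)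
    exact ⟨_, ⟨ψ, hψ, rfl⟩, seqProd_mul_subset mono (fun n => (hψ n).1) hψφ⟩
  inv' := by
    rintro _ ⟨φ, hφ, rfl⟩
    exact ⟨_, ⟨φ, hφ, rfl⟩, fun p hp => inv_mem_seqProd mono (fun n => (hφ n).1) hp⟩
  conj' := by
    rintro x₀ _ ⟨φ, hφ, rfl⟩
    obtain ⟨m, hm⟩ := hunion x₀
    exact ⟨_, ⟨fun k => φ (k + m) ∩ S k,
      fun k => (hφ (k + m)).restrict mono hcompat_t (Nat.le_add_right k m), rfl⟩,
      fun z hz => conj_mem_seqProd mono (fun n => (hφ n).1) hm (fun _ => Set.inter_subset_left) hz⟩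

theorem continuous_subtype_val_groupFilterBasis (n : ℕ) :
    @Continuous _ _ (t n) (groupFilterBasis mono hunion htg hcompat_t hSIN).topology
      ((↑) : S n → G) := by
  let B := groupFilterBasis mono hunion htg hcompat_t hSIN
  let := t n
  let := B.topology
  have := htg n
  refine continuous_of_continuousAt_one (S n).subtype <|
    B.nhds_one_hasBasis.tendsto_right_iff.2 ?_
  rintro _ ⟨φ, hφ, rfl⟩
  exact Filter.mem_of_superset ((hφ n).isOpen.mem_nhds (hφ n).one_mem)
    fun x hx => subset_seqProd (fun k => (hφ k).one_mem) n hx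

theorem topology_groupFilterBasis_le_uDirLim {u : (n : ℕ) → UniformSpace (S n)}
    (hbasis : ∀ n, @IsTwoSidedUniformity (S n) _ (t n) (u n)) :
    (groupFilterBasis mono hunion htg hcompat_t hSIN).topology ≤
      (uDirLim (fun n => (S n : Set G)) u).toTopologicalSpace := by
  let B := groupFilterBasis mono hunion htg hcompat_t hSIN
  rw [uDirLim, UniformSpace.toTopologicalSpace_sInf]
  refine le_iInf₂ fun u' hu' => le_of_nhds_le_nhds fun x O hO => ?_
  obtain ⟨m, hm⟩ := hunion x
  obtain ⟨E, hE, hEO⟩ := (@UniformSpace.mem_nhds_iff G u' x O).1 hO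
  obtain ⟨φ, hφ, hφE⟩ := exists_seqProd_subset mono hcompat_t hSIN hbasis hu' hm hE
  refine Filter.mem_of_superset ((B.nhds_hasBasis x).mem_of_mem ⟨φ, hφ, rfl⟩) ?_
  rintro _ ⟨p, hp, rfl⟩
  exact hEO (hφE p hp)

end GroupFilterBasis

end SINDirectLimit

theorem statement11_general {G : Type u} [Group G] (S : ℕ → Subgroup G)
    (mono : Monotone S) (hunion : ∀ x : G, ∃ n, x ∈ S n)
    (t : (n : ℕ) → TopologicalSpace (S n))
    (htg : ∀ n, @IsTopologicalGroup (S n) (t n) _)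
    (hcompat_t : ∀ n, t n =
      TopologicalSpace.induced (⇑(Subgroup.inclusion (mono (Nat.le_succ n)))) (t (n + 1)))
    (hSIN : ∀ n, ∀ W ∈ @nhds _ (t n) (1 : S n), ∃ U : Set (S n),
      U ⊆ W ∧ @IsOpen _ (t n) U ∧ (1 : S n) ∈ U ∧ U⁻¹ = U ∧
      ∀ g : S n, (fun x => g * x * g⁻¹) '' U = U)
    (u : (n : ℕ) → UniformSpace (S n))
    (htop : ∀ n, (u n).toTopologicalSpace = t n)
    (hbasis : ∀ n, (@uniformity _ (u n)).HasBasis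
      (fun U : Set (S n) => @IsOpen _ (t n) U ∧ (1 : S n) ∈ U ∧ U⁻¹ = U)
      (fun U => {p : S n × S n | p.2⁻¹ * p.1 ∈ U ∧ p.1 * p.2⁻¹ ∈ U})) :
    @IsTopologicalGroup G
        (uDirLim (fun n => (S n : Set G)) u).toTopologicalSpace _ ∧
      (∀ n, @Continuous _ _ (t n)
        (uDirLim (fun n => (S n : Set G)) u).toTopologicalSpace
        (fun x : S n => (x : G))) ∧
      ∀ t' : TopologicalSpace G, @IsTopologicalGroup G t' _ →
        (∀ n, @Continuous _ _ (t n) t' (fun x : S n => (x : G))) →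
        (uDirLim (fun n => (S n : Set G)) u).toTopologicalSpace ≤ t' := by
  open SINDirectLimit in
  let B := groupFilterBasis mono hunion htg hcompat_t hSIN
  have hcont := continuous_subtype_val_groupFilterBasis mono hunion htg hcompat_t hSIN
  have heq : (uDirLim (fun n => (S n : Set G)) u).toTopologicalSpace = B.topology :=
    le_antisymm (uDirLim_toTopologicalSpace_le htg hbasis B.isTopologicalGroup hcont)
      (topology_groupFilterBasis_le_uDirLim mono hunion htg hcompat_t hSIN hbasis)
  exact ⟨heq ▸ B.isTopologicalGroup, fun n => htop n ▸ continuous_subtype_val_uDirLim _ u n,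
    fun t' ht' hcont' => uDirLim_toTopologicalSpace_le htg hbasis ht' hcont'⟩

/-- Let `(X_n)` be an increasing sequence of subgroups of a group `G` with union `G`, each a
SIN topological group, each a topological subgroup of the next one, carrying its two-sided
uniformity.  Then the topology of the uniform direct limit `u-lim X_n` coincides with the
topology of the group direct limit `g-lim X_n`: it turns `G` into a topological group, makes
all inclusions `X_n → G` continuous, and is the strongest (finest) such topology; in
particular the identity map `u-lim X_n → g-lim X_n` is a homeomorphism. -/
theorem statement11 {G : Type u} [Group G] (S : ℕ → Subgroup G)
    (mono : Monotone S) (hunion : ∀ x : G, ∃ n, x ∈ S n)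
    (t : (n : ℕ) → TopologicalSpace (S n))
    (htg : ∀ n, @IsTopologicalGroup (S n) (t n) _)
    (hcompat_t : ∀ n, t n =
      TopologicalSpace.induced (⇑(Subgroup.inclusion (mono (Nat.le_succ n)))) (t (n + 1)))
    (hSIN : ∀ n, ∀ W ∈ @nhds _ (t n) (1 : S n), ∃ U : Set (S n),
      U ⊆ W ∧ @IsOpen _ (t n) U ∧ (1 : S n) ∈ U ∧ U⁻¹ = U ∧
      ∀ g : S n, (fun x => g * x * g⁻¹) '' U = U)
    (u : (n : ℕ) → UniformSpace (S n))
    (htop : ∀ n, (u n).toTopologicalSpace = t n)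
    (hbasis : ∀ n, (@uniformity _ (u n)).HasBasis
      (fun U : Set (S n) => @IsOpen _ (t n) U ∧ (1 : S n) ∈ U ∧ U⁻¹ = U)
      (fun U => {p : S n × S n | p.2⁻¹ * p.1 ∈ U ∧ p.1 * p.2⁻¹ ∈ U}))
    (hcompat_u : ∀ n, u n =
      UniformSpace.comap (⇑(Subgroup.inclusion (mono (Nat.le_succ n)))) (u (n + 1))) :
    @IsTopologicalGroup G
        (uDirLim (fun n => (S n : Set G)) u).toTopologicalSpace _ ∧
      (∀ n, @Continuous _ _ (t n)
        (uDirLim (fun n => (S n : Set G)) u).toTopologicalSpace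
        (fun x : S n => (x : G))) ∧
      ∀ t' : TopologicalSpace G, @IsTopologicalGroup G t' _ →
        (∀ n, @Continuous _ _ (t n) t' (fun x : S n => (x : G))) →
        (uDirLim (fun n => (S n : Set G)) u).toTopologicalSpace ≤ t' :=
  statement11_general S mono hunion t htg hcompat_t hSIN u htop hbasis
end

section
/- Let (X_n)_{n∈ω} be a tower of uniform spaces such that each X_n is locally compact (in the topology induced by its uniformity). Then the identity map t-lim X_n → u-lim X_n is a homeomorphism; that is, the topology of the uniform direct limit u-lim X_n coincides with the final topology on X = ⋃_n X_n with respect to the inclusions X_n → X. -/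
open Set Filter Topology

universe u

/-- A tower of uniform spaces on the ambient set `X`: an increasing sequence
`S 0 ⊆ S 1 ⊆ ⋯` of subsets covering `X`, each `S n` carrying a uniformity which is
the subspace uniformity inherited from `S (n+1)`. -/
structure UniformTower (X : Type u) where
  S : ℕ → Set X
  mono : Monotone S
  iUnion_eq : ⋃ n, S n = Set.univ
  u : (n : ℕ) → UniformSpace (S n)
  compat : ∀ n, u n = UniformSpace.comap (Set.inclusion (mono (Nat.le_succ n))) (u (n + 1))

namespace UniformTower

variable {X : Type u} (T : UniformTower X)

/-- The uniform direct limit: the strongest (finest) uniformity on `X` making all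
the identity inclusions `S n → X` uniformly continuous. -/
noncomputable def dirLim : UniformSpace X :=
  sInf {u' : UniformSpace X |
    ∀ n, @UniformContinuous _ _ (T.u n) u' (Subtype.val : T.S n → X)}

/-- The height `|x| = min {n : x ∈ S n}` of a point of `X`. -/
noncomputable def height (x : X) : ℕ := sInf {n | x ∈ T.S n}

lemma mem_S_height (x : X) : x ∈ T.S (T.height x) := by
  have hx : x ∈ ⋃ n, T.S n := T.iUnion_eq ▸ Set.mem_univ x
  rcases Set.mem_iUnion.mp hx with ⟨n, hn⟩
  exact Nat.sInf_mem ⟨n, show n ∈ {m | x ∈ T.S m} from hn⟩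

/-- Given a sequence of pseudometrics `d n` on the stages `S n`, the distance
`d_{|x,y|}(x,y)` where `|x,y| = max (|x|, |y|)`. -/
noncomputable def chainD (d : (n : ℕ) → T.S n → T.S n → ℝ) (x y : X) : ℝ :=
  d (max (T.height x) (T.height y))
    ⟨x, T.mono (le_max_left _ _) (T.mem_S_height x)⟩
    ⟨y, T.mono (le_max_right _ _) (T.mem_S_height y)⟩

/-- The limit pseudometric `lim d_n` of a sequence of pseudometrics:
`lim d_n (x,y) = inf { Σ_{i=1}^m d_{|x_{i-1},x_i|}(x_{i-1},x_i) : x = x_0, x_1, …, x_m = y }`. -/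
noncomputable def limD (d : (n : ℕ) → T.S n → T.S n → ℝ) (x y : X) : ℝ :=
  sInf {r : ℝ | ∃ (m : ℕ) (c : ℕ → X), c 0 = x ∧ c m = y ∧
    r = ∑ i ∈ Finset.range m, T.chainD d (c i) (c (i + 1))}

/-- A sequence of pseudometrics on the stages of the tower is monotone if
`d n ≤ d (n+1)` on `S n × S n`. -/
def MonotoneSeq (d : (n : ℕ) → T.S n → T.S n → ℝ) : Prop :=
  ∀ n (x y : T.S n),
    d n x y ≤ d (n + 1) (Set.inclusion (T.mono (Nat.le_succ n)) x)
      (Set.inclusion (T.mono (Nat.le_succ n)) y)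

end UniformTower

/-- `d` is a pseudometric: it vanishes on the diagonal, is symmetric and satisfies
the triangle inequality. -/
def IsPseudometric {α : Type*} (d : α → α → ℝ) : Prop :=
  (∀ x, d x x = 0) ∧ (∀ x y, d x y = d y x) ∧ (∀ x y z, d x z ≤ d x y + d y z)

/-- `d` is a uniform pseudometric on the uniform space `(α, u)`:
for every `ε > 0` the set `{d < ε}` is an entourage. -/
def IsUniformPseudometric {α : Type*} (u : UniformSpace α) (d : α → α → ℝ) : Prop :=
  IsPseudometric d ∧ ∀ ε : ℝ, 0 < ε → {p : α × α | d p.1 p.2 < ε} ∈ @uniformity α u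


/-!
Let `U ⊆ X` be open in the final topology and `x₀ ∈ U`. It suffices to find `g : X → [0,1]`,
uniformly continuous on every stage, with `g x₀ = 1` and support in `U`: then `g` is uniformly
continuous on `u-lim X_n`, so `{g ≠ 0}` is an open neighbourhood of `x₀` inside `U`.

Such a `g` is glued from a coherent sequence of compactly supported bumps `X_n → [0,1]` with
support in `U`. A bump on `X_n` extends to `X_{n+1}` in two moves. Katětov: a uniformly continuous
pseudometric on `X_{n+1}`, built from a chain of entourages, makes the bump Lipschitz on `X_n`,
and McShane's formula extends it. Then the minimum with an Urysohn function that is `1` on the old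
support and vanishes outside a compact neighbourhood of it inside `U` (this is where local
compactness is used) makes the support compact and keeps it in `U`.
-/

open Metric Uniformity NNReal Function
open scoped SetRel

theorem SetRel.exists_pseudoMetricSpace_of_comp_comp_subset {Y : Type*} (V : ℕ → SetRel Y Y)
    (hrefl : ∀ k, (V k).IsRefl) (hsymm : ∀ k, (V k).IsSymm)
    (hcomp : ∀ k, V (k + 1) ○ V (k + 1) ○ V (k + 1) ⊆ V k) :
    ∃ I : PseudoMetricSpace Y, ∀ k x y,
      ((x, y) ∈ V k → @dist Y I.toDist x y < (1 / 2) ^ k) ∧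
      (@dist Y I.toDist x y < (1 / 2) ^ (k + 1) → (x, y) ∈ V k) := by
  classical
  -- As in `UniformSpace.metrizable_uniformity`: `d x y = 2⁻ⁿ` for the first `n` with
  -- `(x, y) ∉ V n`, and the chain pseudometric of `d` lies between `d / 2` and `d`.
  have hanti : Antitone V :=
    antitone_nat_of_succ_le fun k => SetRel.right_subset_comp.trans (hcomp k)
  set d : Y → Y → ℝ≥0 := fun x y =>
    if h : ∃ n, (x, y) ∉ V n then (1 / 2) ^ Nat.find h else 0
  have hd_self x : d x x = 0 := dif_neg fun ⟨n, hn⟩ => hn ((hrefl n).refl x)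
  have hd_symm x y : d x y = d y x := by simp only [d, (V _).comm]
  have hr : (1 / 2 : ℝ≥0) ∈ Ioo (0 : ℝ≥0) 1 :=
    ⟨half_pos one_pos, NNReal.half_lt_self one_ne_zero⟩
  have hle_d {x y : Y} {n : ℕ} : (1 / 2) ^ n ≤ d x y ↔ (x, y) ∉ V n := by
    dsimp only [d]
    split_ifs with h
    · rw [(pow_right_strictAnti₀ hr.1 hr.2).le_iff_ge, Nat.find_le_iff]
      exact ⟨fun ⟨m, hmn, hm⟩ hn => hm (hanti hmn hn), fun h => ⟨n, le_rfl, h⟩⟩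
    · push Not at h
      simp [h n]
  let I := PseudoMetricSpace.ofPreNNDist d hd_self hd_symm
  have hdist_le x y : @dist Y I.toDist x y ≤ d x y :=
    PseudoMetricSpace.dist_ofPreNNDist_le _ _ _ x y
  have hd_le x y : (d x y : ℝ) ≤ 2 * @dist Y I.toDist x y := by
    refine PseudoMetricSpace.le_two_mul_dist_ofPreNNDist _ _ _ (fun x₁ x₂ x₃ x₄ => ?_) x y
    by_cases H : ∃ n, (x₁, x₄) ∉ V n
    · refine (dif_pos H).trans_le ?_
      rw [← div_le_iff₀' zero_lt_two, ← mul_one_div ((1 / 2 : ℝ≥0) ^ _), ← pow_succ]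
      simp only [le_max_iff, hle_d, ← not_and_or]
      rintro ⟨h₁₂, h₂₃, h₃₄⟩
      exact Nat.find_spec H (hcomp _ ⟨x₃, ⟨x₂, h₁₂, h₂₃⟩, h₃₄⟩)
    · exact (dif_neg H).trans_le zero_le
  have hd_lt {x y : Y} {k : ℕ} : (d x y : ℝ) < (1 / 2) ^ k ↔ (x, y) ∈ V k := by
    rw [← not_iff_not, not_lt, ← hle_d, ← NNReal.coe_le_coe]
    push_cast; rfl
  refine ⟨I, fun k x y =>
    ⟨fun h => (hdist_le x y).trans_lt (hd_lt.2 h), fun h => hd_lt.1 ?_⟩⟩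
  calc (d x y : ℝ) ≤ 2 * @dist Y I.toDist x y := hd_le x y
    _ < 2 * (1 / 2) ^ (k + 1) := by gcongr
    _ = (1 / 2) ^ k := by ring

theorem UniformSpace.exists_pseudoMetricSpace_le_of_mem_uniformity {Y : Type*}
    [u : UniformSpace Y] (W : ℕ → SetRel Y Y) (hW : ∀ k, W k ∈ 𝓤 Y) :
    ∃ I : PseudoMetricSpace Y, u ≤ I.toUniformSpace ∧
      ∀ k x y, @dist Y I.toDist x y < (1 / 2) ^ (k + 1) → (x, y) ∈ W k := by
  choose! step hstep_mem hstep_symm hstep_sub using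
    fun (k : ℕ) (A : SetRel Y Y) (hA : A ∈ 𝓤 Y) =>
      comp_comp_symm_mem_uniformity_sets (inter_mem hA (hW k))
  let V : ℕ → SetRel Y Y := fun k => Nat.rec (step 0 univ) (fun k A => step (k + 1) A) k
  have hV_mem : ∀ k, V k ∈ 𝓤 Y := fun k => by
    induction k with
    | zero => exact hstep_mem 0 univ univ_mem
    | succ k ih => exact hstep_mem (k + 1) (V k) ih
  have hV_comp k : V (k + 1) ○ V (k + 1) ○ V (k + 1) ⊆ V k ∩ W (k + 1) :=
    hstep_sub (k + 1) (V k) (hV_mem k)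
  have hV_refl k : (V k).IsRefl := isRefl_of_mem_uniformity (hV_mem k)
  have hV_symm k : (V k).IsSymm := by
    cases k with
    | zero => exact hstep_symm 0 univ univ_mem
    | succ k => exact hstep_symm (k + 1) (V k) (hV_mem k)
  have hV_W k : V k ⊆ W k := by
    have hcube : V k ○ V k ○ V k ⊆ W k := by
      cases k with
      | zero => exact (hstep_sub 0 univ univ_mem).trans inter_subset_right
      | succ k => exact (hV_comp k).trans inter_subset_right
    exact SetRel.right_subset_comp.trans hcube
  obtain ⟨I, hI⟩ := SetRel.exists_pseudoMetricSpace_of_comp_comp_subset V hV_refl hV_symm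
    fun k => (hV_comp k).trans inter_subset_left
  refine ⟨I, (@uniformity_basis_dist_pow Y I _ one_half_pos one_half_lt_one).ge_iff.2
    fun k _ => mem_of_superset (hV_mem k) fun p hp => (hI k p.1 p.2).1 hp,
    fun k x y h => hV_W k ((hI k x y).2 h)⟩

theorem le_four_mul_of_forall_lt_pow_half {a b : ℝ} (ha : a ≤ 1) (hb : 0 ≤ b)
    (h : ∀ n : ℕ, b < (1 / 2) ^ (n + 1) → a < (1 / 2) ^ n) : a ≤ 4 * b := by
  by_contra! hlt
  obtain ⟨n, hn, hn'⟩ :=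
    exists_nat_pow_near_of_lt_one (by linarith) ha one_half_pos one_half_lt_one
  have : b < (1 / 2) ^ (n + 1 + 1) := by
    calc b < a / 4 := by linarith
      _ ≤ (1 / 2) ^ n / 4 := by gcongr
      _ = (1 / 2) ^ (n + 1 + 1) := by ring
  exact (h (n + 1) this).not_gt hn

theorem exists_lipschitzWith_comp_eq {Y Z : Type*} [PseudoMetricSpace Y] {ι : Z → Y}
    {g : Z → ℝ} {K : ℝ≥0} (hg : ∀ a b, dist (g a) (g b) ≤ K * dist (ι a) (ι b)) :
    ∃ G : Y → ℝ, LipschitzWith K G ∧ G ∘ ι = g := by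
  classical
  have hext : ∀ z, extend ι g 0 (ι z) = g z := fun z => by
    have h : ∃ a, ι a = ι z := ⟨z, rfl⟩
    rw [extend_def, dif_pos h, ← dist_le_zero]
    simpa [h.choose_spec] using hg h.choose z
  obtain ⟨G, hG, hGeq⟩ := LipschitzOnWith.extend_real (f := extend ι g 0) (s := range ι) <|
    LipschitzOnWith.of_dist_le_mul <| by
      rintro _ ⟨a, rfl⟩ _ ⟨b, rfl⟩
      simpa only [hext] using hg a b
  exact ⟨G, hG, funext fun z => (hGeq (mem_range_self z)).symm.trans (hext z)⟩

theorem IsUniformInducing.exists_uniformContinuous_comp_eq {Y Z : Type*} [UniformSpace Y]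
    [UniformSpace Z] {ι : Z → Y} (hι : IsUniformInducing ι) {g : Z → ℝ}
    (hg : UniformContinuous g) (hg01 : ∀ z, g z ∈ Icc (0 : ℝ) 1) :
    ∃ G : Y → ℝ, UniformContinuous G ∧ (∀ y, G y ∈ Icc (0 : ℝ) 1) ∧
      G ∘ ι = g := by
  have hW (k : ℕ) :
      ∃ W ∈ 𝓤 Y, ∀ a b, (ι a, ι b) ∈ W → dist (g a) (g b) < (1 / 2) ^ k := by
    have := hg (dist_mem_uniformity (pow_pos one_half_pos k))
    rw [← hι.comap_uniformity] at this
    obtain ⟨W, hW, hsub⟩ := mem_comap.1 this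
    exact ⟨W, hW, fun a b h => @hsub (a, b) h⟩
  choose W hW_mem hW using hW
  obtain ⟨I, hI_le, hI⟩ := UniformSpace.exists_pseudoMetricSpace_le_of_mem_uniformity W hW_mem
  have hlip a b : dist (g a) (g b) ≤ (4 : ℝ≥0) * @dist Y I.toDist (ι a) (ι b) := by
    have hle : dist (g a) (g b) ≤ 1 := by
      rw [Real.dist_eq, abs_sub_le_iff]
      constructor <;> linarith [(hg01 a).1, (hg01 a).2, (hg01 b).1, (hg01 b).2]
    exact le_four_mul_of_forall_lt_pow_half hle dist_nonneg fun n h => hW n a b (hI n _ _ h)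
  obtain ⟨G, hG, hGι⟩ := @exists_lipschitzWith_comp_eq Y Z I ι g 4 hlip
  have hG_trunc : LipschitzWith 4 fun y => max 0 (min 1 (G y)) := (hG.const_min 1).const_max 0
  refine ⟨fun y => max 0 (min 1 (G y)), ?_,
    fun y => ⟨le_max_left _ _, max_le zero_le_one (min_le_left _ _)⟩, funext fun z => ?_⟩
  · exact uniformContinuous_iff_le_comap.2
      (hI_le.trans (uniformContinuous_iff_le_comap.1 hG_trunc.uniformContinuous))
  · show max 0 (min 1 (G (ι z))) = g z
    rw [show G (ι z) = g z from congr_fun hGι z, min_eq_right (hg01 z).2,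
      max_eq_right (hg01 z).1]

structure IsBumpIn {Y : Type*} [TopologicalSpace Y] (O : Set Y) (f : Y → ℝ) : Prop where
  continuous : Continuous f
  mem_Icc : ∀ y, f y ∈ Icc (0 : ℝ) 1
  hasCompactSupport : HasCompactSupport f
  tsupport_subset : tsupport f ⊆ O

theorem IsBumpIn.uniformContinuous {Y : Type*} [UniformSpace Y] {O : Set Y} {f : Y → ℝ}
    (hf : IsBumpIn O f) : UniformContinuous f :=
  hf.hasCompactSupport.uniformContinuous_of_continuous hf.continuous

theorem exists_isBumpIn_eqOn_one {Y : Type*} [TopologicalSpace Y] [RegularSpace Y]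
    [LocallyCompactSpace Y] {K O : Set Y} (hK : IsCompact K) (hO : IsOpen O) (hKO : K ⊆ O) :
    ∃ f : Y → ℝ, IsBumpIn O f ∧ EqOn f 1 K := by
  obtain ⟨L, -, hL_closed, hKL, hLO⟩ := exists_compact_closed_between hK hO hKO
  obtain ⟨f, hf1, hf0, hf_supp, hf01⟩ := exists_continuous_one_zero_of_isCompact hK
    isOpen_interior.isClosed_compl (disjoint_compl_right_iff_subset.2 hKL)
  have hsupp : support f ⊆ L := fun y hy => interior_subset <| by
    by_contra h
    exact hy (hf0 h)
  exact ⟨f, ⟨f.continuous, hf01, hf_supp, (closure_minimal hsupp hL_closed).trans hLO⟩, hf1⟩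

theorem IsUniformInducing.exists_isBumpIn_comp_eq {Y Z : Type*} [UniformSpace Y]
    [LocallyCompactSpace Y] [UniformSpace Z] {ι : Z → Y} (hι : IsUniformInducing ι) {O : Set Y}
    (hO : IsOpen O) {g : Z → ℝ} (hg : IsBumpIn (ι ⁻¹' O) g) :
    ∃ G : Y → ℝ, IsBumpIn O G ∧ G ∘ ι = g := by
  obtain ⟨G₀, hG₀, hG₀01, hG₀ι⟩ :=
    hι.exists_uniformContinuous_comp_eq hg.uniformContinuous hg.mem_Icc
  obtain ⟨h, hh, hh1⟩ := exists_isBumpIn_eqOn_one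
    (hg.hasCompactSupport.image hι.uniformContinuous.continuous) hO
    (image_subset_iff.2 hg.tsupport_subset)
  -- `min G₀ h` still extends `g`, since `h = 1` where `g ≠ 0`, and is supported where `h` is.
  have hsupp : support (fun y => min (G₀ y) (h y)) ⊆ support h := fun y hy hy0 =>
    hy <| show min (G₀ y) (h y) = 0 by rw [hy0]; exact min_eq_right (hG₀01 y).1
  refine ⟨fun y => min (G₀ y) (h y), ⟨hG₀.continuous.min hh.continuous, fun y => ⟨le_min
    (hG₀01 y).1 (hh.mem_Icc y).1, (min_le_right _ _).trans (hh.mem_Icc y).2⟩,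
    hh.hasCompactSupport.mono' (hsupp.trans subset_closure),
    (closure_mono hsupp).trans hh.tsupport_subset⟩, funext fun z => ?_⟩
  show min (G₀ (ι z)) (h (ι z)) = g z
  rw [show G₀ (ι z) = g z from congr_fun hG₀ι z]
  by_cases hz : g z = 0
  · rw [hz]
    exact min_eq_left (hh.mem_Icc _).1
  · rw [hh1 ⟨z, subset_tsupport g hz, rfl⟩]
    exact min_eq_left (hg.mem_Icc z).2

namespace UniformTower

variable {X : Type u} (T : UniformTower X)

attribute [local instance] UniformTower.u

theorem isUniformInducing_inclusion_succ (n : ℕ) :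
    IsUniformInducing (inclusion (T.mono n.le_succ)) :=
  isUniformInducing_iff_uniformSpace.2 (T.compat n).symm

theorem uniformContinuous_inclusion {a b : ℕ} (h : a ≤ b) :
    UniformContinuous (inclusion (T.mono h)) := by
  induction b, h using Nat.le_induction with
  | base => exact uniformContinuous_id
  | succ n _ ih => exact (T.isUniformInducing_inclusion_succ n).uniformContinuous.comp ih

theorem uniformContinuous_val_dirLim (n : ℕ) :
    UniformContinuous[T.u n, T.dirLim] (Subtype.val : T.S n → X) :=
  uniformContinuous_sInf_rng.2 fun _ hu => hu n

theorem uniformContinuous_dirLim_iff {β : Type*} [UniformSpace β] {f : X → β} :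
    UniformContinuous[T.dirLim, _] f ↔
      ∀ n, UniformContinuous (f ∘ Subtype.val : T.S n → β) := by
  refine ⟨fun hf n => @UniformContinuous.comp _ _ _ _ T.dirLim _ _ _ hf
    (T.uniformContinuous_val_dirLim n), fun hf => ?_⟩
  have hle : T.dirLim ≤ UniformSpace.comap f ‹_› :=
    sInf_le fun n => uniformContinuous_comap' (hf n)
  exact uniformContinuous_iff_le_comap.2 hle

theorem exists_mem_S_add (m : ℕ) (x : X) : ∃ k, x ∈ T.S (m + k) :=
  ⟨T.height x, T.mono (Nat.le_add_left _ m) (T.mem_S_height x)⟩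

theorem exists_forall_eq_of_coherent {β : Type*} {m : ℕ} (F : ∀ k, T.S (m + k) → β)
    (hF : ∀ k x, F (k + 1) (inclusion (T.mono (m + k).le_succ) x) = F k x) :
    ∃ f : X → β, ∀ k (x : T.S (m + k)), f x = F k x := by
  have hF_le {j k : ℕ} (hjk : j ≤ k) (x : T.S (m + j)) :
      F k (inclusion (T.mono (Nat.add_le_add_left hjk m)) x) = F j x := by
    induction k, hjk using Nat.le_induction with
    | base => rfl
    | succ k _ ih => exact (hF k _).trans ih
  choose idx hidx using T.exists_mem_S_add m
  refine ⟨fun x => F (idx x) ⟨x, hidx x⟩, fun k x => ?_⟩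
  show F (idx x) ⟨x, hidx x⟩ = F k x
  rw [← hF_le (le_max_left (idx x) k), ← hF_le (le_max_right (idx x) k) x]

theorem exists_coherent_isBumpIn (hlc : ∀ n, LocallyCompactSpace (T.S n)) {U : Set X}
    (hU : ∀ n, IsOpen (Subtype.val ⁻¹' U : Set (T.S n))) {m : ℕ} {x₀ : T.S m}
    (hx₀ : (x₀ : X) ∈ U) :
    ∃ F : ∀ k, T.S (m + k) → ℝ, (∀ k, IsBumpIn (Subtype.val ⁻¹' U) (F k)) ∧
      F 0 x₀ = 1 ∧
      ∀ k x, F (k + 1) (inclusion (T.mono (m + k).le_succ) x) = F k x := by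
  obtain ⟨F₀, hF₀, hF₀x₀⟩ := exists_isBumpIn_eqOn_one isCompact_singleton (hU m)
    (singleton_subset_iff.2 hx₀)
  choose! next hnext_bump hnext_comp using
    fun k (f : T.S (m + k) → ℝ) (hf : IsBumpIn (Subtype.val ⁻¹' U) f) =>
      (T.isUniformInducing_inclusion_succ (m + k)).exists_isBumpIn_comp_eq (hU (m + k + 1)) hf
  let B : ∀ k, {f : T.S (m + k) → ℝ // IsBumpIn (Subtype.val ⁻¹' U) f} := fun k =>
    Nat.rec (motive := fun k => {f : T.S (m + k) → ℝ // IsBumpIn (Subtype.val ⁻¹' U) f})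
      ⟨F₀, hF₀⟩ (fun k f => ⟨next k f.1, hnext_bump k f.1 f.2⟩) k
  exact ⟨fun k => (B k).1, fun k => (B k).2, hF₀x₀ rfl,
    fun k => congr_fun (hnext_comp k _ (B k).2)⟩

theorem exists_uniformContinuous_dirLim_support_subset
    (hlc : ∀ n, LocallyCompactSpace (T.S n)) {U : Set X}
    (hU : ∀ n, IsOpen (Subtype.val ⁻¹' U : Set (T.S n))) {x₀ : X} (hx₀ : x₀ ∈ U) :
    ∃ g : X → ℝ, UniformContinuous[T.dirLim, _] g ∧ g x₀ = 1 ∧ support g ⊆ U := by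
  let x₀' : T.S (T.height x₀) := ⟨x₀, T.mem_S_height x₀⟩
  obtain ⟨F, hF, hFx₀, hF_coh⟩ := T.exists_coherent_isBumpIn hlc hU (x₀ := x₀') hx₀
  obtain ⟨g, hg⟩ := T.exists_forall_eq_of_coherent F hF_coh
  refine ⟨g, T.uniformContinuous_dirLim_iff.2 fun n => ?_, (hg 0 x₀').trans hFx₀,
    fun y hy => ?_⟩
  · have : g ∘ Subtype.val = F n ∘ inclusion (T.mono (Nat.le_add_left n _)) :=
      funext fun x => hg n (inclusion _ x)
    rw [this]
    exact (hF n).uniformContinuous.comp (T.uniformContinuous_inclusion (Nat.le_add_left n _))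
  · obtain ⟨k, hk⟩ := T.exists_mem_S_add (T.height x₀) y
    rw [mem_support, hg k ⟨y, hk⟩] at hy
    exact (hF k).tsupport_subset (subset_tsupport _ hy)

theorem isOpen_dirLim_of_forall_isOpen (hlc : ∀ n, LocallyCompactSpace (T.S n)) {U : Set X}
    (hU : ∀ n, IsOpen (Subtype.val ⁻¹' U : Set (T.S n))) :
    IsOpen[T.dirLim.toTopologicalSpace] U := by
  refine (@isOpen_iff_forall_mem_open X T.dirLim.toTopologicalSpace U).2 fun x₀ hx₀ => ?_
  obtain ⟨g, hg, hgx₀, hgU⟩ := T.exists_uniformContinuous_dirLim_support_subset hlc hU hx₀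
  exact ⟨support g, hgU, @IsOpen.preimage _ _ T.dirLim.toTopologicalSpace _ _
    (@UniformContinuous.continuous _ _ T.dirLim _ _ hg) _ isOpen_compl_singleton,
    by simp [hgx₀]⟩

theorem coinduced_le_dirLim (n : ℕ) :
    TopologicalSpace.coinduced (Subtype.val : T.S n → X) (T.u n).toTopologicalSpace ≤
      T.dirLim.toTopologicalSpace :=
  continuous_iff_coinduced_le.1 <|
    @UniformContinuous.continuous _ _ _ T.dirLim _ (T.uniformContinuous_val_dirLim n)

end UniformTower

/-- If every stage `X_n` of a tower of uniform spaces is locally compact (in the topology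
induced by its uniformity), then the identity map `t-lim X_n → u-lim X_n` is a homeomorphism:
the topology of the uniform direct limit coincides with the final topology (the strongest
topology making all inclusions `X_n → X` continuous). -/
theorem statement14 {X : Type u} (T : UniformTower X)
    (hlc : ∀ n, @LocallyCompactSpace (T.S n) (T.u n).toTopologicalSpace) :
    T.dirLim.toTopologicalSpace =
      ⨆ n, TopologicalSpace.coinduced (Subtype.val : T.S n → X)
        (T.u n).toTopologicalSpace :=
  le_antisymm (TopologicalSpace.le_def.2 fun _ hU => T.isOpen_dirLim_of_forall_isOpen hlc
    (isOpen_iSup_iff.1 hU)) (iSup_le T.coinduced_le_dirLim)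
end
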